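/- Let ℓ_0, ℓ_1, ℓ_2 be pairwise nonproportional linear forms over ℂ. Then L_ℂ(ℓ_0^2 ℓ_1^2) = 3 and L_ℂ(ℓ_0^2 ℓ_1 ℓ_2) = 3, while L_ℂ(ℓ_0^3 ℓ_1) = 4. -/

import Mathlib

open MvPolynomial Finset

/-- The linear form `a*x + b*y` as a binary polynomial over `ℂ`. -/
noncomputable def lform (a b : ℂ) : MvPolynomial (Fin 2) ℂ := C a * X 0 + C b * X 1

/-- The `K`-rank of a binary form `p`: the least `r` such that `p` is a `K`-linear
combination of `r` d-th powers of linear forms with coefficients in `K`. -/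
noncomputable def rankIn (K : Subfield ℂ) (d : ℕ) (p : MvPolynomial (Fin 2) ℂ) : ℕ :=
  sInf {r : ℕ | ∃ lam a b : Fin r → ℂ, (∀ j, lam j ∈ K ∧ a j ∈ K ∧ b j ∈ K) ∧
    p = ∑ j, C (lam j) * lform (a j) (b j) ^ d}

/-- The Waring rank `L_ℂ` of a binary form. -/
noncomputable def rankC (d : ℕ) (p : MvPolynomial (Fin 2) ℂ) : ℕ :=
  sInf {r : ℕ | ∃ lam a b : Fin r → ℂ, p = ∑ j, C (lam j) * lform (a j) (b j) ^ d}

/-- Single partial derivative as a plain function. -/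
noncomputable def pd (i : Fin 2) (p : MvPolynomial (Fin 2) ℂ) : MvPolynomial (Fin 2) ℂ :=
  pderiv i p

/-- `apolar h p = h(D) p`, the differential operator of `h` applied to `p`. -/
noncomputable def apolar (h p : MvPolynomial (Fin 2) ℂ) : MvPolynomial (Fin 2) ℂ :=
  ∑ m ∈ h.support, h.coeff m • ((pd 0)^[m 0] ((pd 1)^[m 1] p))

/-- The subfield of `ℂ` generated by a subfield `K` and a set `S`. -/
noncomputable def adj (K : Subfield ℂ) (S : Set ℂ) : Subfield ℂ := Subfield.closure (↑K ∪ S)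

/-- `z` and `w` are conjugate over `K` in `K(s)`: `z = a + b s`, `w = a - b s` with `a, b ∈ K`. -/
def conjPair (K : Subfield ℂ) (s z w : ℂ) : Prop :=
  ∃ a b : ℂ, a ∈ K ∧ b ∈ K ∧ z = a + b * s ∧ w = a - b * s

noncomputable def lformR (a b : ℝ) : MvPolynomial (Fin 2) ℝ := C a * X 0 + C b * X 1

noncomputable def rankR (d : ℕ) (p : MvPolynomial (Fin 2) ℝ) : ℕ :=
  sInf {r : ℕ | ∃ lam a b : Fin r → ℝ, p = ∑ j, C (lam j) * lformR (a j) (b j) ^ d}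

/-!
Ranks are invariant under invertible linear substitutions, so `ℓ₀ = x`, `ℓ₁ = y` and
`ℓ₂ = s x + t y` with `s t ≠ 0`. The upper bounds are explicit decompositions. For the lower bounds
write `mₖ = ∑ⱼ λⱼ aⱼ^(4-k) bⱼ^k`, so that `∑ⱼ λⱼ (aⱼ x + bⱼ y)⁴ = ∑ₖ (4 choose k) mₖ x^(4-k) y^k`.
With two terms the Hankel matrix `(m_(i+j))` has rank at most two, while for `x²y(sx + ty)` its
determinant is `-(t/6)³`. If `x³y` were a sum of three terms, the cubic `∏ⱼ (bⱼ X - aⱼ Y)`, which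
vanishes at every `(aⱼ, bⱼ)`, would give `b₀b₁b₂ m₁ = 0`; so some term is a multiple of `x`, and the
same argument with the quadratic of the other two leaves a single power `λ (a x + b y)⁴` up to a
multiple of `x⁴`; but `(λa³b)² = λa⁴ · λa²b²` is incompatible with `m₁ = 1/4`, `m₂ = 0`.
-/

def HasWaringDecomposition (d r : ℕ) (p : MvPolynomial (Fin 2) ℂ) : Prop :=
  ∃ lam a b : Fin r → ℂ, p = ∑ j, C (lam j) * lform (a j) (b j) ^ d

section Decomposition

variable {d r : ℕ} {p : MvPolynomial (Fin 2) ℂ}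

lemma eval_lform (x y a b : ℂ) : eval ![x, y] (lform a b) = a * x + b * y := by simp [lform]

lemma HasWaringDecomposition.succ (h : HasWaringDecomposition d r p) :
    HasWaringDecomposition d (r + 1) p := by
  obtain ⟨lam, a, b, rfl⟩ := h
  refine ⟨Fin.cons 0 lam, Fin.cons 0 a, Fin.cons 0 b, ?_⟩
  simp [Fin.sum_univ_succ]

lemma HasWaringDecomposition.mono {n : ℕ} (h : HasWaringDecomposition d r p) (hrn : r ≤ n) :
    HasWaringDecomposition d n p := by
  induction n, hrn using Nat.le_induction with
  | base => exact h
  | succ n _ ih => exact ih.succ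

lemma rankC_eq_succ (h : HasWaringDecomposition d (r + 1) p)
    (h' : ¬ HasWaringDecomposition d r p) : rankC d p = r + 1 :=
  le_antisymm (Nat.sInf_le h) <| le_csInf ⟨_, h⟩ fun _ hn =>
    Nat.succ_le_of_lt <| lt_of_not_ge fun hnr => h' (HasWaringDecomposition.mono hn hnr)

lemma hasWaringDecomposition_iff_eval :
    HasWaringDecomposition d r p ↔
      ∃ lam a b : Fin r → ℂ, ∀ x y, eval ![x, y] p = ∑ j, lam j * (a j * x + b j * y) ^ d := by
  refine ⟨fun ⟨lam, a, b, hp⟩ => ⟨lam, a, b, fun x y => by simp [hp, eval_lform]⟩,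
    fun ⟨lam, a, b, hp⟩ => ⟨lam, a, b, MvPolynomial.funext fun v => ?_⟩⟩
  have hv : v = ![v 0, v 1] := by ext i; fin_cases i <;> rfl
  rw [hv, hp]
  simp [eval_lform]

end Decomposition

section LinearSubstitution

variable {α β γ δ : ℂ}

lemma lform_one_zero : lform 1 0 = X 0 := by simp [lform]

lemma lform_zero_one : lform 0 1 = X 1 := by simp [lform]

lemma aeval_lform_lform (c d : ℂ) :
    aeval ![lform α β, lform γ δ] (lform c d) = lform (c * α + d * γ) (c * β + d * δ) := by
  simp only [lform, map_add, map_mul, aeval_C, aeval_X, algebraMap_eq, Matrix.cons_val_zero,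
    Matrix.cons_val_one]
  ring

lemma aeval_lform_aeval_lform (α' β' γ' δ' : ℂ) (p : MvPolynomial (Fin 2) ℂ) :
    aeval ![lform α' β', lform γ' δ'] (aeval ![lform α β, lform γ δ] p) =
      aeval ![lform (α * α' + β * γ') (α * β' + β * δ'),
        lform (γ * α' + δ * γ') (γ * β' + δ * δ')] p := by
  rw [comp_aeval_apply]
  refine congrArg (aeval · p) (funext fun i => ?_)
  fin_cases i <;> exact aeval_lform_lform _ _

lemma aeval_lform_inv (hdet : α * δ - γ * β ≠ 0) (p : MvPolynomial (Fin 2) ℂ) :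
    aeval ![lform (δ / (α * δ - γ * β)) (-β / (α * δ - γ * β)),
        lform (-γ / (α * δ - γ * β)) (α / (α * δ - γ * β))]
      (aeval ![lform α β, lform γ δ] p) = p := by
  rw [aeval_lform_aeval_lform]
  convert aeval_X_left_apply p
  funext i
  fin_cases i
  · refine (congrArg₂ lform ?_ ?_).trans lform_one_zero <;> field_simp <;> ring
  · refine (congrArg₂ lform ?_ ?_).trans lform_zero_one <;> field_simp <;> ring

lemma lform_eq_aeval_lform (hdet : α * δ - γ * β ≠ 0) (e f : ℂ) :
    lform e f = aeval ![lform α β, lform γ δ]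
      (lform ((e * δ - γ * f) / (α * δ - γ * β)) ((α * f - e * β) / (α * δ - γ * β))) := by
  rw [aeval_lform_lform]
  congr 1 <;> rw [div_mul_eq_mul_div, div_mul_eq_mul_div, ← add_div, eq_div_iff hdet] <;> ring

variable {d r : ℕ} {p : MvPolynomial (Fin 2) ℂ}

lemma HasWaringDecomposition.aeval_lform (h : HasWaringDecomposition d r p) :
    HasWaringDecomposition d r (aeval ![lform α β, lform γ δ] p) := by
  obtain ⟨lam, a, b, rfl⟩ := h
  refine ⟨lam, fun j => a j * α + b j * γ, fun j => a j * β + b j * δ, ?_⟩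
  simp only [map_sum, map_mul, map_pow, aeval_C, algebraMap_eq, aeval_lform_lform]

lemma hasWaringDecomposition_aeval_lform_iff (hdet : α * δ - γ * β ≠ 0) :
    HasWaringDecomposition d r (aeval ![lform α β, lform γ δ] p) ↔
      HasWaringDecomposition d r p :=
  ⟨fun h => aeval_lform_inv hdet p ▸ h.aeval_lform, HasWaringDecomposition.aeval_lform⟩

lemma rankC_aeval_lform (hdet : α * δ - γ * β ≠ 0) :
    rankC d (aeval ![lform α β, lform γ δ] p) = rankC d p :=
  congrArg sInf <| Set.ext fun _ => hasWaringDecomposition_aeval_lform_iff hdet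

end LinearSubstitution

lemma binary_quartic_coeffs_eq_zero {K : Type*} [Field K] [CharZero K] {e₀ e₁ e₂ e₃ e₄ : K}
    (h : ∀ x y : K,
      e₀ * x ^ 4 + e₁ * x ^ 3 * y + e₂ * x ^ 2 * y ^ 2 + e₃ * x * y ^ 3 + e₄ * y ^ 4 = 0) :
    e₀ = 0 ∧ e₁ = 0 ∧ e₂ = 0 ∧ e₃ = 0 ∧ e₄ = 0 := by
  have h₁₀ := h 1 0
  have h₀₁ := h 0 1
  have h₁₁ := h 1 1
  have h₁neg := h 1 (-1)
  have h₁₂ := h 1 2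
  have he₃ : e₃ = 0 := by
    linear_combination (h₁₂ + 3 * h₁₀ - 3 * h₁₁ - h₁neg - 12 * h₀₁) / 6
  refine ⟨by linear_combination h₁₀, ?_, ?_, he₃, by linear_combination h₀₁⟩
  · linear_combination (h₁₁ - h₁neg) / 2 - he₃
  · linear_combination (h₁₁ + h₁neg) / 2 - h₁₀ - h₀₁

section Moments

variable {r : ℕ}

def moment (lam a b : Fin r → ℂ) (k : ℕ) : ℂ := ∑ j, lam j * a j ^ (4 - k) * b j ^ k

lemma sum_mul_fourth_power_eq (lam a b : Fin r → ℂ) (x y : ℂ) :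
    ∑ j, lam j * (a j * x + b j * y) ^ 4 =
      moment lam a b 0 * x ^ 4 + 4 * moment lam a b 1 * x ^ 3 * y +
        6 * moment lam a b 2 * x ^ 2 * y ^ 2 + 4 * moment lam a b 3 * x * y ^ 3 +
        moment lam a b 4 * y ^ 4 := by
  simp only [moment, Finset.sum_mul, Finset.mul_sum, ← Finset.sum_add_distrib]
  exact Finset.sum_congr rfl fun j _ => by ring

lemma moment_comp_perm (σ : Equiv.Perm (Fin r)) (lam a b : Fin r → ℂ) (k : ℕ) :
    moment (lam ∘ σ) (a ∘ σ) (b ∘ σ) k = moment lam a b k :=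
  Equiv.sum_comp σ fun j => lam j * a j ^ (4 - k) * b j ^ k

lemma HasWaringDecomposition.exists_moments {p : MvPolynomial (Fin 2) ℂ}
    (h : HasWaringDecomposition 4 r p) {e₀ e₁ e₂ e₃ e₄ : ℂ} (hp : ∀ x y, eval ![x, y] p =
      e₀ * x ^ 4 + e₁ * x ^ 3 * y + e₂ * x ^ 2 * y ^ 2 + e₃ * x * y ^ 3 + e₄ * y ^ 4) :
    ∃ lam a b : Fin r → ℂ, moment lam a b 0 = e₀ ∧ 4 * moment lam a b 1 = e₁ ∧
      6 * moment lam a b 2 = e₂ ∧ 4 * moment lam a b 3 = e₃ ∧ moment lam a b 4 = e₄ := by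
  obtain ⟨lam, a, b, hab⟩ := hasWaringDecomposition_iff_eval.1 h
  obtain ⟨h₀, h₁, h₂, h₃, h₄⟩ := binary_quartic_coeffs_eq_zero (e₀ := moment lam a b 0 - e₀)
    (e₁ := 4 * moment lam a b 1 - e₁) (e₂ := 6 * moment lam a b 2 - e₂)
    (e₃ := 4 * moment lam a b 3 - e₃) (e₄ := moment lam a b 4 - e₄) fun x y => by
      linear_combination
        (sum_mul_fourth_power_eq lam a b x y).symm.trans ((hab x y).symm.trans (hp x y))
  exact ⟨lam, a, b, sub_eq_zero.1 h₀, sub_eq_zero.1 h₁, sub_eq_zero.1 h₂, sub_eq_zero.1 h₃,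
    sub_eq_zero.1 h₄⟩

def catalecticant (lam a b : Fin r → ℂ) : Matrix (Fin 3) (Fin 3) ℂ :=
  Matrix.of fun i j => moment lam a b (i + j)

lemma det_catalecticant_fin_two (lam a b : Fin 2 → ℂ) : (catalecticant lam a b).det = 0 := by
  simp [Matrix.det_fin_three, catalecticant, moment, Fin.sum_univ_two]
  ring

end Moments

section NormalForms

open Complex

lemma not_hasWaringDecomposition_two_X0_sq_mul_X1_mul_lform {s t : ℂ} (ht : t ≠ 0) :
    ¬ HasWaringDecomposition 4 2 (X 0 ^ 2 * X 1 * lform s t) := by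
  intro h
  obtain ⟨lam, a, b, h₀, h₁, h₂, h₃, h₄⟩ := h.exists_moments (e₀ := 0) (e₁ := s) (e₂ := t)
    (e₃ := 0) (e₄ := 0) fun x y => by
      simp only [map_mul, map_pow, eval_X, eval_lform, Matrix.cons_val_zero, Matrix.cons_val_one]
      ring
  have hm₃ : moment lam a b 3 = 0 := by linear_combination h₃ / 4
  have hdet := det_catalecticant_fin_two lam a b
  simp only [Matrix.det_fin_three, catalecticant, Matrix.of_apply, Fin.val_zero, Fin.val_one,
    Fin.val_two, Nat.reduceAdd, h₀, hm₃, h₄] at hdet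
  have hm₂ : moment lam a b 2 ^ 3 = 0 := by linear_combination -hdet
  exact ht (by rw [← h₂, pow_eq_zero_iff three_ne_zero |>.1 hm₂, mul_zero])

lemma not_hasWaringDecomposition_two_X0_sq_mul_X1_sq :
    ¬ HasWaringDecomposition 4 2 (X 0 ^ 2 * X 1 ^ 2) := by
  simpa [← lform_zero_one, pow_two, mul_assoc] using
    not_hasWaringDecomposition_two_X0_sq_mul_X1_mul_lform (s := 0) one_ne_zero

lemma moment_one_eq_zero_of_b_zero {lam a b : Fin 3 → ℂ} (hb : b 0 = 0)
    (h₂ : moment lam a b 2 = 0) (h₃ : moment lam a b 3 = 0) : moment lam a b 1 = 0 := by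
  have hq : moment lam a b 1 * (b 1 * b 2) = 0 := by
    -- `(b₁ X - a₁ Y)(b₂ X - a₂ Y)` vanishes at `(a₁, b₁)` and `(a₂, b₂)`, and `b₀ = 0`
    simp only [moment, Fin.sum_univ_three, Nat.reduceSub, pow_one, hb] at h₂ h₃ ⊢
    linear_combination (a 1 * b 2 + b 1 * a 2) * h₂ - a 1 * a 2 * h₃
  obtain h | h | h : moment lam a b 1 = 0 ∨ b 1 = 0 ∨ b 2 = 0 := by
    simpa only [mul_eq_zero] using hq
  · exact h
  -- two of the forms are now multiples of `x`; for the third, `(λa³b)² = λa⁴ · λa²b²`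
  all_goals
    apply pow_eq_zero_iff two_ne_zero |>.1
    simp only [moment, Fin.sum_univ_three, Nat.reduceSub, pow_one, hb, h] at h₂ ⊢
  · linear_combination (lam 2 * a 2 ^ 4) * h₂
  · linear_combination (lam 1 * a 1 ^ 4) * h₂

lemma not_hasWaringDecomposition_three_X0_cube_mul_X1 :
    ¬ HasWaringDecomposition 4 3 (X 0 ^ 3 * X 1) := by
  intro h
  obtain ⟨lam, a, b, -, h₁, h₂, h₃, h₄⟩ := h.exists_moments (e₀ := 0) (e₁ := 1) (e₂ := 0)
    (e₃ := 0) (e₄ := 0) fun x y => by simp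
  have hb : b 0 * b 1 * b 2 = 0 := by
    -- `∏ⱼ (bⱼ X - aⱼ Y)` vanishes at every `(aⱼ, bⱼ)`
    simp only [moment, Fin.sum_univ_three, Nat.reduceSub, pow_zero, pow_one, mul_one] at *
    linear_combination -(b 0 * b 1 * b 2) * h₁
      + (2 / 3) * (a 0 * b 1 * b 2 + a 1 * b 0 * b 2 + a 2 * b 0 * b 1) * h₂
      - (a 0 * a 1 * b 2 + a 0 * b 1 * a 2 + b 0 * a 1 * a 2) * h₃ + 4 * (a 0 * a 1 * a 2) * h₄
  obtain ⟨i, hi⟩ : ∃ i, b i = 0 := by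
    simp only [mul_eq_zero] at hb
    rcases hb with (hb | hb) | hb <;> exact ⟨_, hb⟩
  have hm₁ := moment_one_eq_zero_of_b_zero (lam := lam ∘ Equiv.swap 0 i)
    (a := a ∘ Equiv.swap 0 i) (b := b ∘ Equiv.swap 0 i) (by simpa using hi)
    (by rw [moment_comp_perm]; linear_combination h₂ / 6)
    (by rw [moment_comp_perm]; linear_combination h₃ / 4)
  rw [moment_comp_perm] at hm₁
  rw [hm₁, mul_zero] at h₁
  exact zero_ne_one h₁

lemma hasWaringDecomposition_X0_sq_mul_X1_sq :
    HasWaringDecomposition 4 3 (X 0 ^ 2 * X 1 ^ 2) := by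
  obtain ⟨ω, hω⟩ : ∃ ω : ℂ, ω ^ 2 + ω + 1 = 0 := by
    have h := (Complex.isPrimitiveRoot_exp 3 (by norm_num)).geom_sum_eq_zero (by norm_num)
    simp only [Finset.sum_range_succ, Finset.sum_range_zero] at h
    exact ⟨_, by linear_combination h⟩
  refine hasWaringDecomposition_iff_eval.2
    ⟨![1 / 18, ω / 18, ω ^ 2 / 18], ![1, ω, ω ^ 2], ![1, 1, 1], fun x y => ?_⟩
  simp only [Fin.sum_univ_three, map_mul, map_pow, eval_X, Matrix.cons_val_zero,
    Matrix.cons_val_one, Matrix.cons_val]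
  linear_combination (-y^4 - 4*x*y^3 + 12*x^2*y^2 - 4*x^3*y - x^4 + 4*ω*x*y^3 - 12*ω*x^2*y^2
    + 4*ω*x^3*y + ω*x^4 - 4*ω^2*x*y^3 + 6*ω^3*x^2*y^2 - 4*ω^3*x^3*y - ω^3*x^4 - 6*ω^4*x^2*y^2
    + ω^4*x^4 + 4*ω^5*x^3*y - ω^5*x^4 - 4*ω^6*x^3*y + ω^7*x^4 - ω^8*x^4) / 18 * hω

lemma hasWaringDecomposition_X0_sq_mul_X1_mul_lform {s t : ℂ} (hs : s ≠ 0) (ht : t ≠ 0) :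
    HasWaringDecomposition 4 3 (X 0 ^ 2 * X 1 * lform s t) := by
  -- the coefficient vectors `(3s, 2t)`, `(±3is, 2t)` of the three forms are the zeros of the cubic
  -- `(2tX)³ - (2tX)²(3sY) + (2tX)(3sY)² - (3sY)³`, which is apolar to `x²y(sx + ty)`
  have key : ∀ A B : ℂ, 16 * A ^ 3 * B + 24 * A ^ 2 * B ^ 2 =
      2 * (A + B) ^ 4 + (-1 + I) * (I * A + B) ^ 4 + (-1 - I) * (-I * A + B) ^ 4 := fun A B => by
    linear_combination (-8*A*B^3 + 12*A^2*B^2 + 8*A^3*B - 8*A^3*B*I^2 - 2*A^4 + 2*A^4*I^2) * I_sq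
  set K := (864 * s ^ 2 * t)⁻¹
  have hK : 864 * s ^ 2 * t * K = 1 :=
    mul_inv_cancel₀ (mul_ne_zero (mul_ne_zero (by norm_num) (pow_ne_zero 2 hs)) ht)
  refine hasWaringDecomposition_iff_eval.2 ⟨![2 * K, (-1 + I) * K, (-1 - I) * K],
    ![3 * s, 3 * I * s, -3 * I * s], ![2 * t, 2 * t, 2 * t], fun x y => ?_⟩
  simp only [Fin.sum_univ_three, map_mul, map_pow, eval_X, eval_lform, Matrix.cons_val_zero,
    Matrix.cons_val_one, Matrix.cons_val]
  linear_combination (-(x ^ 2 * y * (s * x + t * y))) * hK + K * key (3 * s * x) (2 * t * y)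

lemma hasWaringDecomposition_X0_cube_mul_X1 : HasWaringDecomposition 4 4 (X 0 ^ 3 * X 1) := by
  refine hasWaringDecomposition_iff_eval.2 ⟨![1 / 16, -1 / 16, -I / 16, I / 16],
    ![1, 1, 1, 1], ![1, -1, I, -I], fun x y => ?_⟩
  simp only [Fin.sum_univ_four, map_mul, map_pow, eval_X, Matrix.cons_val_zero,
    Matrix.cons_val_one, Matrix.cons_val]
  linear_combination (8*x^3*y - 8*x*y^3 + 8*x*y^3*I^2) / 16 * I_sq

end NormalForms

lemma rankC_X0_sq_mul_X1_sq : rankC 4 (X 0 ^ 2 * X 1 ^ 2) = 3 :=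
  rankC_eq_succ hasWaringDecomposition_X0_sq_mul_X1_sq
    not_hasWaringDecomposition_two_X0_sq_mul_X1_sq

lemma rankC_X0_sq_mul_X1_mul_lform {s t : ℂ} (hs : s ≠ 0) (ht : t ≠ 0) :
    rankC 4 (X 0 ^ 2 * X 1 * lform s t) = 3 :=
  rankC_eq_succ (hasWaringDecomposition_X0_sq_mul_X1_mul_lform hs ht)
    (not_hasWaringDecomposition_two_X0_sq_mul_X1_mul_lform ht)

lemma rankC_X0_cube_mul_X1 : rankC 4 (X 0 ^ 3 * X 1) = 4 :=
  rankC_eq_succ hasWaringDecomposition_X0_cube_mul_X1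
    not_hasWaringDecomposition_three_X0_cube_mul_X1

/-- Waring ranks of binary quartics with repeated roots: `L_ℂ(ℓ₀²ℓ₁²) = 3`,
`L_ℂ(ℓ₀²ℓ₁ℓ₂) = 3`, and `L_ℂ(ℓ₀³ℓ₁) = 4`. -/
theorem quartic_ranks (a b : Fin 3 → ℂ)
    (hdist : ∀ i j, i ≠ j → a i * b j - a j * b i ≠ 0) :
    rankC 4 (lform (a 0) (b 0) ^ 2 * lform (a 1) (b 1) ^ 2) = 3 ∧
    rankC 4 (lform (a 0) (b 0) ^ 2 * lform (a 1) (b 1) * lform (a 2) (b 2)) = 3 ∧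
    rankC 4 (lform (a 0) (b 0) ^ 3 * lform (a 1) (b 1)) = 4 := by
  have hdet := hdist 0 1 (by decide)
  have hrank {p : MvPolynomial (Fin 2) ℂ} {n : ℕ} (hp : rankC 4 p = n) :
      rankC 4 (aeval ![lform (a 0) (b 0), lform (a 1) (b 1)] p) = n :=
    (rankC_aeval_lform hdet).trans hp
  refine ⟨?_, ?_, ?_⟩
  · simpa only [map_mul, map_pow, aeval_X, Matrix.cons_val_zero, Matrix.cons_val_one]
      using hrank rankC_X0_sq_mul_X1_sq
  · rw [lform_eq_aeval_lform hdet (a 2) (b 2)]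
    simpa only [map_mul, map_pow, aeval_X, Matrix.cons_val_zero, Matrix.cons_val_one]
      using hrank (rankC_X0_sq_mul_X1_mul_lform (div_ne_zero (hdist 2 1 (by decide)) hdet)
        (div_ne_zero (hdist 0 2 (by decide)) hdet))
  · simpa only [map_mul, map_pow, aeval_X, Matrix.cons_val_zero, Matrix.cons_val_one]
      using hrank rankC_X0_cube_mul_X1
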